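/- arXiv:2203.01150 — 4 statements merged into one kernel-verified Lean document; each statement's English description precedes it below -/
import Mathlib

section
/- Consider the action of the dihedral group of order 20 on ZMod 10 generated by the rotations x ↦ x + k and the reflections x ↦ -x + k. This action induces an action on perfect matchings of ZMod 10. Among the perfect matchings in which every pair {i,j} satisfies i - j ∈ {3,5,7} (mod 10), there are exactly 4 orbits under this action. -/
/-- A permutation of `ZMod 10` belonging to the dihedral group of order 20:
a rotation `x ↦ x + k` or a reflection `x ↦ -x + k`. -/
def IsDihedral (φ : Equiv.Perm (ZMod 10)) : Prop :=
  (∃ k : ZMod 10, ∀ x, φ x = x + k) ∨ (∃ k : ZMod 10, ∀ x, φ x = -x + k)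

/-- A perfect matching of `ZMod 10` all of whose pairs `{i,j}` satisfy
`i - j ∈ {3, 5, 7}`. -/
def GoodMatching (M : Finset (Sym2 (ZMod 10))) : Prop :=
  M.card = 5 ∧
  (∀ x : ZMod 10, ∃! p, p ∈ M ∧ x ∈ p) ∧
  ∀ p ∈ M, ∀ i j : ZMod 10, p = s(i, j) →
    i - j = 3 ∨ i - j = 5 ∨ i - j = 7

/-- The dihedral action relates `M` to `M'`. -/
def DihedralRel (M M' : Finset (Sym2 (ZMod 10))) : Prop :=
  ∃ φ : Equiv.Perm (ZMod 10), IsDihedral φ ∧ M' = M.image (Sym2.map φ)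


/-! Every pair of a good matching has odd difference, so it contains exactly one even point; hence a
good matching is determined by the offsets in `{3, 5, 7}` of the partners of `0, 2, 4, 6, 8`, and
the `3 ^ 5` candidates are checked directly to lie in the orbit of one of four representatives.
These representatives have `5, 0, 1, 3` diameters respectively, and the number of diameters is a
dihedral invariant because the antipodal map `x ↦ x + 5` commutes with every rotation and
reflection. -/

open Finset

namespace Decagon

def rotation (k : ZMod 10) : Equiv.Perm (ZMod 10) := Equiv.addRight k

def reflection (k : ZMod 10) : Equiv.Perm (ZMod 10) := (Equiv.neg _).trans (Equiv.addRight k)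

theorem isDihedral_rotation (k : ZMod 10) : IsDihedral (rotation k) := Or.inl ⟨k, fun _ => rfl⟩

theorem isDihedral_reflection (k : ZMod 10) : IsDihedral (reflection k) :=
  Or.inr ⟨k, fun _ => rfl⟩

def IsDiameter (p : Sym2 (ZMod 10)) : Prop := ∀ a, a ∈ p → a + 5 ∈ p

instance : DecidablePred IsDiameter := fun p => inferInstanceAs (Decidable (∀ a, a ∈ p → _))

def diameterCount (M : Finset (Sym2 (ZMod 10))) : ℕ := #(M.filter IsDiameter)

def orbitReps : Fin 4 → Finset (Sym2 (ZMod 10))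
  | 0 => {s(0, 5), s(1, 6), s(2, 7), s(3, 8), s(4, 9)}
  | 1 => {s(0, 3), s(4, 7), s(8, 1), s(2, 5), s(6, 9)}
  | 2 => {s(0, 5), s(1, 8), s(2, 9), s(4, 7), s(3, 6)}
  | 3 => {s(0, 5), s(1, 6), s(3, 8), s(4, 7), s(2, 9)}

set_option maxRecDepth 20000 in
theorem goodMatching_orbitReps : ∀ i, GoodMatching (orbitReps i) := by
  unfold GoodMatching ExistsUnique
  decide

theorem diameterCount_orbitReps_injective : Function.Injective (diameterCount ∘ orbitReps) := by
  unfold Function.Injective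
  decide

def offsets : Finset (ZMod 10) := {3, 5, 7}

def evens : Finset (ZMod 10) := {0, 2, 4, 6, 8}

theorem mem_evens_or_mem_evens_of_sub_mem_offsets :
    ∀ i j : ZMod 10, i - j ∈ offsets → i ∈ evens ∨ j ∈ evens := by
  decide

def evenOffsetMatching (a b c d e : ZMod 10) : Finset (Sym2 (ZMod 10)) :=
  {s(0, a), s(2, 2 + b), s(4, 4 + c), s(6, 6 + d), s(8, 8 + e)}

set_option maxRecDepth 20000 in
theorem exists_eq_image_orbitReps_of_covers :
    ∀ a ∈ offsets, ∀ b ∈ offsets, ∀ c ∈ offsets, ∀ d ∈ offsets, ∀ e ∈ offsets,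
      (∀ x, ∃ p ∈ evenOffsetMatching a b c d e, x ∈ p) → ∃ i k,
        evenOffsetMatching a b c d e = (orbitReps i).image (Sym2.map (rotation k)) ∨
        evenOffsetMatching a b c d e = (orbitReps i).image (Sym2.map (reflection k)) := by
  decide

end Decagon

open Decagon

namespace IsDihedral

variable {φ : Equiv.Perm (ZMod 10)}

theorem map_add_five (hφ : IsDihedral φ) (x : ZMod 10) : φ (x + 5) = φ x + 5 := by
  have neg_five : (-5 : ZMod 10) = 5 := rfl
  rcases hφ with ⟨k, hk⟩ | ⟨k, hk⟩
  · rw [hk, hk]; ring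
  · rw [hk, hk, neg_add, neg_five]; ring

theorem isDiameter_map_iff (hφ : IsDihedral φ) (p : Sym2 (ZMod 10)) :
    IsDiameter (p.map φ) ↔ IsDiameter p := by
  simp only [IsDiameter, Sym2.mem_map, forall_exists_index, and_imp, forall_apply_eq_imp_iff₂,
    ← hφ.map_add_five, φ.injective.eq_iff, exists_eq_right]

end IsDihedral

theorem DihedralRel.diameterCount_eq {M M' : Finset (Sym2 (ZMod 10))} (h : DihedralRel M M') :
    diameterCount M' = diameterCount M := by
  obtain ⟨φ, hφ, rfl⟩ := h
  rw [diameterCount, filter_image, card_image_of_injective _ (Sym2.map.injective φ.injective)]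
  simp only [hφ.isDiameter_map_iff, diameterCount]

namespace GoodMatching

variable {M : Finset (Sym2 (ZMod 10))}

theorem eq_of_mem (hM : GoodMatching M) {p q : Sym2 (ZMod 10)} {x : ZMod 10} (hp : p ∈ M)
    (hq : q ∈ M) (hxp : x ∈ p) (hxq : x ∈ q) : p = q :=
  (hM.2.1 x).unique ⟨hp, hxp⟩ ⟨hq, hxq⟩

theorem sub_mem_offsets (hM : GoodMatching M) {i j : ZMod 10} (h : s(i, j) ∈ M) :
    i - j ∈ offsets := by
  simpa [offsets] using hM.2.2 _ h i j rfl

theorem exists_offset (hM : GoodMatching M) (x : ZMod 10) :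
    ∃ d ∈ offsets, s(x, x + d) ∈ M := by
  obtain ⟨p, ⟨hp, hxp⟩, -⟩ := hM.2.1 x
  obtain ⟨y, rfl⟩ := Sym2.mem_iff_exists.1 hxp
  exact ⟨y - x, hM.sub_mem_offsets (by rwa [Sym2.eq_swap]), by rwa [add_sub_cancel]⟩

theorem exists_mem_evens (hM : GoodMatching M) {p : Sym2 (ZMod 10)} (hp : p ∈ M) :
    ∃ e ∈ evens, e ∈ p := by
  induction p using Sym2.ind with
  | h i j =>
    rcases mem_evens_or_mem_evens_of_sub_mem_offsets i j (hM.sub_mem_offsets hp) with h | h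
    exacts [⟨i, h, Sym2.mem_mk_left i j⟩, ⟨j, h, Sym2.mem_mk_right i j⟩]

theorem exists_eq_evenOffsetMatching (hM : GoodMatching M) :
    ∃ a ∈ offsets, ∃ b ∈ offsets, ∃ c ∈ offsets, ∃ d ∈ offsets, ∃ e ∈ offsets,
      M = evenOffsetMatching a b c d e := by
  choose δ hδ hδM using hM.exists_offset
  refine ⟨δ 0, hδ 0, δ 2, hδ 2, δ 4, hδ 4, δ 6, hδ 6, δ 8, hδ 8, ?_⟩
  ext p
  constructor
  · intro hp
    obtain ⟨e, he, hep⟩ := hM.exists_mem_evens hp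
    rw [hM.eq_of_mem hp (hδM e) hep (Sym2.mem_mk_left _ _)]
    simp only [evens, mem_insert, mem_singleton] at he
    rcases he with rfl | rfl | rfl | rfl | rfl <;> simp [evenOffsetMatching]
  · simp only [evenOffsetMatching, mem_insert, mem_singleton]
    rintro (rfl | rfl | rfl | rfl | rfl)
    exacts [by simpa using hδM 0, hδM 2, hδM 4, hδM 6, hδM 8]

theorem exists_dihedralRel_orbitReps (hM : GoodMatching M) : ∃ i, DihedralRel (orbitReps i) M := by
  obtain ⟨a, ha, b, hb, c, hc, d, hd, e, he, rfl⟩ := hM.exists_eq_evenOffsetMatching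
  obtain ⟨i, k, h | h⟩ :=
    exists_eq_image_orbitReps_of_covers a ha b hb c hc d hd e he fun x => (hM.2.1 x).exists
  exacts [⟨i, rotation k, isDihedral_rotation k, h⟩, ⟨i, reflection k, isDihedral_reflection k, h⟩]

end GoodMatching

/-- Among the matchings of `ZMod 10` whose pairs are at difference `3, 5` or `7`,
there are exactly 4 orbits under the dihedral group of order 20. -/
theorem theta5_dihedral_orbits :
    ∃ reps : Fin 4 → Finset (Sym2 (ZMod 10)),
      (∀ i, GoodMatching (reps i)) ∧
      ∀ M, GoodMatching M → ∃! i, DihedralRel (reps i) M := by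
  refine ⟨orbitReps, goodMatching_orbitReps, fun M hM => ?_⟩
  obtain ⟨i, hi⟩ := hM.exists_dihedralRel_orbitReps
  exact ⟨i, hi, fun j hj =>
    diameterCount_orbitReps_injective (hj.diameterCount_eq.symm.trans hi.diameterCount_eq)⟩
end

section
/- Define a rotation system for the multigraph Θ₅ (two vertices u, v joined by five parallel edges labeled by Fin 5) to be a pair (σ_u, σ_v) of permutations of Fin 5 each of which is a single 5-cycle. Define the darts to be Fin 5 × Bool, and the face permutation Φ by Φ(e, true) = (σ_v(e), false) and Φ(e, false) = (σ_u(e), true). Say the rotation system is one-faced if Φ acts transitively on the 10 darts. Two rotation systems are equivalent if one can be obtained from the other by some combination of: relabeling edges by a permutation π of Fin 5 (replacing σ_u, σ_v by π σ_u π⁻¹, π σ_v π⁻¹), swapping the roles of u and v (swapping σ_u and σ_v), and reflection (replacing σ_u, σ_v by σ_u⁻¹, σ_v⁻¹). Then there are exactly 3 equivalence classes of one-faced rotation systems for Θ₅. -/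
/-!
Relabelling the edges conjugates both rotations, so since all 5-cycles are conjugate we may
assume `σ_u` is the standard 5-cycle `c = (0 1 2 3 4)`; relabelling preserves both being a
rotation system of `Θ₅` and being one-faced. An exhaustive search over the 24 five-cycles `σ_v`
and the 480 symmetries then shows that every one-faced `(c, σ_v)` is equivalent to one of
`(c, c)`, `(c, (0 1 3 4 2))`, `(c, c²)`, and another finite check shows that these three are
pairwise inequivalent.
-/

/-- A rotation system for the multigraph `Θ₅`: a pair of permutations of the
five parallel edges, one rotation for each of the two vertices. -/
abbrev Theta5RotSys := Equiv.Perm (Fin 5) × Equiv.Perm (Fin 5)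

/-- Both rotations are single 5-cycles. -/
def IsTheta5 (R : Theta5RotSys) : Prop :=
  (R.1.IsCycle ∧ R.1.support.card = 5) ∧ (R.2.IsCycle ∧ R.2.support.card = 5)

/-- The face permutation on the darts `Fin 5 × Bool`:
`Φ (e, true) = (σ_v e, false)` and `Φ (e, false) = (σ_u e, true)`,
where `σ_u = R.1` and `σ_v = R.2`. -/
def faceNext (R : Theta5RotSys) : Fin 5 × Bool → Fin 5 × Bool :=
  fun d => if d.2 then (R.2 d.1, false) else (R.1 d.1, true)

/-- The face permutation acts transitively on the 10 darts. -/
def OneFaced (R : Theta5RotSys) : Prop :=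
  ∀ d d' : Fin 5 × Bool, ∃ k : ℕ, (faceNext R)^[k] d = d'

/-- Equivalence of rotation systems: relabelling of the edges, optionally
swapping the two vertices, optionally reflecting (inverting both rotations). -/
def EquivTheta5 (R R' : Theta5RotSys) : Prop :=
  ∃ π : Equiv.Perm (Fin 5), ∃ s r : Bool,
    let p := if s then (R.2, R.1) else R
    let q := if r then (p.1⁻¹, p.2⁻¹) else p
    R' = (π * q.1 * π⁻¹, π * q.2 * π⁻¹)

open Equiv Finset

theorem Equiv.Perm.isCycle_and_card_support_eq_iff_pow_eq_one {α : Type*} [Fintype α]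
    [DecidableEq α] {p : ℕ} [hp : Fact p.Prime] (hα : Fintype.card α < 2 * p) {σ : Perm α} :
    σ.IsCycle ∧ #σ.support = p ↔ σ ^ p = 1 ∧ σ ≠ 1 := by
  constructor
  · rintro ⟨hσ, hcard⟩
    refine ⟨by rw [← hcard, ← hσ.orderOf, pow_orderOf_eq_one], fun h => ?_⟩
    simp [h, hp.out.ne_zero.symm] at hcard
  · rintro ⟨hpow, hne⟩
    have hord : orderOf σ = p := orderOf_eq_prime hpow hne
    have hσ : σ.IsCycle := Perm.isCycle_of_prime_order' (hord ▸ hp.out) (hord ▸ hα)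
    exact ⟨hσ, hσ.orderOf ▸ hord⟩

def Theta5RotSys.act (π : Perm (Fin 5)) (s r : Bool) (R : Theta5RotSys) : Theta5RotSys :=
  let p := if s then (R.2, R.1) else R
  let q := if r then (p.1⁻¹, p.2⁻¹) else p
  (π * q.1 * π⁻¹, π * q.2 * π⁻¹)

open Theta5RotSys

theorem Theta5RotSys.act_act (π₁ π₂ : Perm (Fin 5)) (s₁ s₂ r₁ r₂ : Bool)
    (R : Theta5RotSys) :
    act π₂ s₂ r₂ (act π₁ s₁ r₁ R) = act (π₂ * π₁) (xor s₂ s₁) (xor r₂ r₁) R := by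
  cases s₁ <;> cases s₂ <;> cases r₁ <;> cases r₂ <;> simp [act, mul_assoc]

theorem Theta5RotSys.act_one (R : Theta5RotSys) : act 1 false false R = R := by
  simp [act]

theorem equivTheta5_iff {R R' : Theta5RotSys} :
    EquivTheta5 R R' ↔ ∃ π s r, R' = act π s r R :=
  Iff.rfl

instance : DecidableRel EquivTheta5 := fun _ _ => decidable_of_iff _ equivTheta5_iff.symm

theorem EquivTheta5.symm {R R' : Theta5RotSys} (h : EquivTheta5 R R') :
    EquivTheta5 R' R := by
  obtain ⟨π, s, r, rfl⟩ := equivTheta5_iff.1 h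
  exact equivTheta5_iff.2 ⟨π⁻¹, s, r, by simp [act_act, act_one]⟩

theorem EquivTheta5.trans {R R' R'' : Theta5RotSys} (h : EquivTheta5 R R')
    (h' : EquivTheta5 R' R'') : EquivTheta5 R R'' := by
  obtain ⟨π, s, r, rfl⟩ := equivTheta5_iff.1 h
  obtain ⟨π', s', r', rfl⟩ := equivTheta5_iff.1 h'
  exact equivTheta5_iff.2 ⟨π' * π, _, _, act_act ..⟩

theorem isTheta5_iff (R : Theta5RotSys) :
    IsTheta5 R ↔ (R.1 ^ 5 = 1 ∧ R.1 ≠ 1) ∧ (R.2 ^ 5 = 1 ∧ R.2 ≠ 1) := by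
  have : Fact (Nat.Prime 5) := ⟨by norm_num⟩
  have hcard : Fintype.card (Fin 5) < 2 * 5 := by simp
  simp only [IsTheta5, Perm.isCycle_and_card_support_eq_iff_pow_eq_one hcard]

instance : DecidablePred IsTheta5 := fun R => decidable_of_iff _ (isTheta5_iff R).symm

theorem IsTheta5.relabel {R : Theta5RotSys} (hR : IsTheta5 R) (π : Perm (Fin 5)) :
    IsTheta5 (act π false false R) := by
  obtain ⟨⟨hc₁, hs₁⟩, hc₂, hs₂⟩ := hR
  exact ⟨⟨hc₁.conj, by simpa [act, Perm.card_support_conj]⟩,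
    hc₂.conj, by simpa [act, Perm.card_support_conj]⟩

theorem IsTheta5.exists_relabel_fst_eq_finRotate {R : Theta5RotSys} (hR : IsTheta5 R) :
    ∃ π, (act π false false R).1 = finRotate 5 := by
  have hcard : #R.1.support = #(finRotate 5).support := by simp [hR.1.2, support_finRotate]
  obtain ⟨π, hπ⟩ := isConj_iff.1 (hR.1.1.isConj (isCycle_finRotate (n := 3)) hcard)
  exact ⟨π, hπ⟩

def Theta5RotSys.facePerm (R : Theta5RotSys) : Perm (Fin 5 × Bool) where
  toFun := faceNext R
  invFun d := if d.2 then (R.1⁻¹ d.1, false) else (R.2⁻¹ d.1, true)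
  left_inv := by rintro ⟨e, _ | _⟩ <;> simp [faceNext]
  right_inv := by rintro ⟨e, _ | _⟩ <;> simp [faceNext]

theorem oneFaced_iff_sameCycle (R : Theta5RotSys) :
    OneFaced R ↔ ∀ d d', (facePerm R).SameCycle d d' := by
  refine ⟨fun h d d' => ?_, fun h d d' => ?_⟩
  · obtain ⟨k, hk⟩ := h d d'
    exact ⟨k, by rwa [zpow_natCast, ← Perm.iterate_eq_pow]⟩
  · obtain ⟨k, hk⟩ := (h d d').exists_nat_pow_eq
    exact ⟨k, by rwa [← Perm.iterate_eq_pow] at hk⟩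

instance : DecidablePred OneFaced := fun R => decidable_of_iff _ (oneFaced_iff_sameCycle R).symm

theorem Theta5RotSys.facePerm_relabel (π : Perm (Fin 5)) (R : Theta5RotSys) :
    facePerm (act π false false R) =
      π.prodCongr (Equiv.refl Bool) * facePerm R * (π.prodCongr (Equiv.refl Bool))⁻¹ := by
  ext ⟨e, _ | _⟩ <;> simp [facePerm, faceNext, act]

theorem OneFaced.relabel {R : Theta5RotSys} (h : OneFaced R) (π : Perm (Fin 5)) :
    OneFaced (act π false false R) := by
  rw [oneFaced_iff_sameCycle, facePerm_relabel] at *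
  exact fun d d' => Perm.sameCycle_conj.2 (h _ _)

def Theta5RotSys.reps : Fin 3 → Theta5RotSys :=
  ![(finRotate 5, finRotate 5), (finRotate 5, List.formPerm [0, 1, 3, 4, 2]),
    (finRotate 5, finRotate 5 ^ 2)]

set_option maxRecDepth 100000 in
theorem Theta5RotSys.reps_isTheta5_oneFaced : ∀ i, IsTheta5 (reps i) ∧ OneFaced (reps i) := by
  decide

set_option maxRecDepth 100000 in
theorem Theta5RotSys.eq_of_equivTheta5_reps :
    ∀ i j, EquivTheta5 (reps i) (reps j) → i = j := by
  decide

set_option maxRecDepth 100000 in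
theorem Theta5RotSys.exists_equivTheta5_reps_of_fst_eq_finRotate :
    ∀ τ, IsTheta5 (finRotate 5, τ) → OneFaced (finRotate 5, τ) →
      ∃ i, EquivTheta5 (reps i) (finRotate 5, τ) := by
  decide

theorem Theta5RotSys.exists_equivTheta5_reps {R : Theta5RotSys} (hR : IsTheta5 R)
    (hOne : OneFaced R) : ∃ i, EquivTheta5 (reps i) R := by
  obtain ⟨π, hπ⟩ := hR.exists_relabel_fst_eq_finRotate
  set R₀ := act π false false R
  have hR₀ : R₀ = (finRotate 5, R₀.2) := Prod.ext hπ rfl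
  obtain ⟨i, hi⟩ := exists_equivTheta5_reps_of_fst_eq_finRotate R₀.2
    (hR₀ ▸ hR.relabel π) (hR₀ ▸ hOne.relabel π)
  have hRR₀ : EquivTheta5 R R₀ := ⟨π, false, false, rfl⟩
  exact ⟨i, hi.trans (hR₀ ▸ hRR₀.symm)⟩

/-- There are exactly 3 equivalence classes of one-faced rotation systems of
`Θ₅`, i.e. exactly three distinct 2-cell embeddings of `Θ₅` on the double torus. -/
theorem theta5_three_embeddings :
    ∃ reps : Fin 3 → Theta5RotSys,
      (∀ i, IsTheta5 (reps i) ∧ OneFaced (reps i)) ∧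
      ∀ R, IsTheta5 R → OneFaced R → ∃! i, EquivTheta5 (reps i) R := by
  refine ⟨reps, reps_isTheta5_oneFaced, fun R hR hOne => ?_⟩
  obtain ⟨i, hi⟩ := exists_equivTheta5_reps hR hOne
  exact ⟨i, hi, fun j hj => eq_of_equivTheta5_reps j i (hj.trans hi.symm)⟩
end

section
/- Define a rotation system for K_{3,3} (vertex set Fin 6 with bipartition {0,1,2} versus {3,4,5}, all 9 cross edges present) to be a function assigning to each vertex a cyclic ordering of its 3 neighbors; there are 2⁶ = 64 rotation systems. Define darts to be ordered pairs (x, y) of adjacent vertices, and the face permutation Φ(x, y) = (y, ρ_y(x)) where ρ_y is the rotation at y; faces are the orbits of Φ. Two rotation systems ρ, ρ' are equivalent if there exists a graph automorphism φ of K_{3,3} such that either ρ'_{φ(y)}(φ(x)) = φ(ρ_y(x)) for all darts (x,y), or ρ'_{φ(y)}(φ(x)) = φ(ρ_y⁻¹(x)) for all darts (x,y) (reflection allowed). Then there is exactly 1 equivalence class of rotation systems of K_{3,3} whose face permutation has exactly 1 orbit. -/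
/-- Adjacency in `K_{3,3}` with parts `{0,1,2}` and `{3,4,5}`. -/
def adjK33 (x y : Fin 6) : Prop :=
  (x.val < 3 ∧ 3 ≤ y.val) ∨ (3 ≤ x.val ∧ y.val < 3)

/-- A rotation system of `K_{3,3}`: each vertex `y` gets a permutation cyclically
permuting its 3 neighbors (no fixed neighbor) and fixing all non-neighbors. -/
def IsRotSysK33 (ρ : Fin 6 → Equiv.Perm (Fin 6)) : Prop :=
  ∀ y : Fin 6,
    (∀ x, adjK33 x y → adjK33 (ρ y x) y ∧ ρ y x ≠ x) ∧
    (∀ x, ¬ adjK33 x y → ρ y x = x)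

/-- The face permutation on darts: `Φ (x, y) = (y, ρ_y x)`. -/
def facePermK33 (ρ : Fin 6 → Equiv.Perm (Fin 6)) :
    Fin 6 × Fin 6 → Fin 6 × Fin 6 :=
  fun d => (d.2, ρ d.2 d.1)

/-- The face permutation has exactly one orbit on the 18 darts. -/
def OneFaceK33 (ρ : Fin 6 → Equiv.Perm (Fin 6)) : Prop :=
  ∀ d d' : Fin 6 × Fin 6, adjK33 d.1 d.2 → adjK33 d'.1 d'.2 →
    ∃ k : ℕ, (facePermK33 ρ)^[k] d = d'

/-- Equivalence of rotation systems via a graph automorphism of `K_{3,3}`,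
optionally composed with reflection (reversal of all rotations). -/
def EquivRotK33 (ρ ρ' : Fin 6 → Equiv.Perm (Fin 6)) : Prop :=
  ∃ φ : Equiv.Perm (Fin 6),
    (∀ x y, adjK33 x y ↔ adjK33 (φ x) (φ y)) ∧
    ((∀ x y, adjK33 x y → ρ' (φ y) (φ x) = φ (ρ y x)) ∨
     (∀ x y, adjK33 x y → ρ' (φ y) (φ x) = φ ((ρ y)⁻¹ x)))

/-!
A rotation at a vertex of `K_{3,3}` is one of the two cyclic orders of the opposite part, so a
rotation system is a sign vector `b : Fin 6 → Bool`. A finite check of the face permutation shows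
that there is exactly one face precisely when the signs are constant on exactly one of the two
parts (24 of the 64 sign vectors). Conjugating by an odd permutation of one part reverses the signs
on the other part, and swapping the parts swaps the two halves of `b`; these automorphisms already
act transitively on the 24 one-face sign vectors, so no reflection is needed.
-/

open Function

theorem Function.Injective.exists_iterate_lt_card {α : Type*} [Fintype α] {f : α → α}
    (hf : Injective f) {a b : α} (h : ∃ k, f^[k] a = b) :
    ∃ k < Fintype.card α, f^[k] a = b := by
  obtain ⟨k, rfl⟩ := h
  have hpos := minimalPeriod_pos_of_mem_periodicPts (hf.mem_periodicPts a)
  exact ⟨k % minimalPeriod f a, (Nat.mod_lt _ hpos).trans_le minimalPeriod_le_card,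
    iterate_mod_minimalPeriod_eq⟩

theorem Function.Injective.exists_iterate_eq_of_iterate_eq {α : Type*} [Finite α] {f : α → α}
    (hf : Injective f) {a b : α} {k : ℕ} (h : f^[k] a = b) : ∃ m, f^[m] b = a := by
  have ha := hf.mem_periodicPts a
  rw [← mem_periodicOrbit_iff (hf.mem_periodicPts b), ← h, periodicOrbit_apply_iterate_eq ha]
  exact self_mem_periodicOrbit ha

instance (x y : Fin 6) : Decidable (adjK33 x y) :=
  inferInstanceAs (Decidable ((x.val < 3 ∧ 3 ≤ y.val) ∨ (3 ≤ x.val ∧ y.val < 3)))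

theorem facePermK33_injective (ρ : Fin 6 → Equiv.Perm (Fin 6)) : Injective (facePermK33 ρ) := by
  rintro ⟨x, y⟩ ⟨x', y'⟩ h
  simp only [facePermK33, Prod.mk.injEq] at h
  obtain ⟨rfl, h⟩ := h
  rw [(ρ y).injective h]

-- The bound `36 = card (Fin 6 × Fin 6)` is what makes one-facedness decidable.
theorem oneFaceK33_iff {ρ : Fin 6 → Equiv.Perm (Fin 6)} {d₀ : Fin 6 × Fin 6}
    (hd₀ : adjK33 d₀.1 d₀.2) :
    OneFaceK33 ρ ↔ ∀ d : Fin 6 × Fin 6, adjK33 d.1 d.2 → ∃ k < 36, (facePermK33 ρ)^[k] d₀ = d := by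
  have hinj := facePermK33_injective ρ
  refine ⟨fun h d hd => hinj.exists_iterate_lt_card (h d₀ d hd₀ hd), fun h d d' hd hd' => ?_⟩
  obtain ⟨k, -, hk⟩ := h d hd
  obtain ⟨m, hm⟩ := hinj.exists_iterate_eq_of_iterate_eq hk
  obtain ⟨k', -, hk'⟩ := h d' hd'
  exact ⟨k' + m, by rw [iterate_add_apply, hm, hk']⟩

namespace K33

def IsAut (φ : Equiv.Perm (Fin 6)) : Prop :=
  ∀ x y, adjK33 x y ↔ adjK33 (φ x) (φ y)

def Transports (φ : Equiv.Perm (Fin 6)) (ρ ρ' : Fin 6 → Equiv.Perm (Fin 6)) : Prop :=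
  ∀ x y, adjK33 x y → ρ' (φ y) (φ x) = φ (ρ y x)

instance (φ : Equiv.Perm (Fin 6)) : Decidable (IsAut φ) := by
  unfold IsAut; infer_instance

instance (φ : Equiv.Perm (Fin 6)) (ρ ρ' : Fin 6 → Equiv.Perm (Fin 6)) :
    Decidable (Transports φ ρ ρ') := by
  unfold Transports; infer_instance

theorem equivRotK33_of_transports {φ φ' : Equiv.Perm (Fin 6)}
    {ρ₀ ρ ρ' : Fin 6 → Equiv.Perm (Fin 6)} (hφ : IsAut φ) (hφ' : IsAut φ')
    (h : Transports φ ρ₀ ρ) (h' : Transports φ' ρ₀ ρ') : EquivRotK33 ρ ρ' := by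
  have hφsymm : IsAut φ.symm := fun x y => by
    rw [hφ (φ.symm x), Equiv.apply_symm_apply, Equiv.apply_symm_apply]
  refine ⟨φ.symm.trans φ', fun x y => (hφsymm x y).trans (hφ' _ _), Or.inl fun x y hxy => ?_⟩
  have hpre := (hφsymm x y).1 hxy
  have hρ := h _ _ hpre
  simp only [Equiv.apply_symm_apply] at hρ
  simp only [Equiv.trans_apply, h' _ _ hpre, hρ, Equiv.symm_apply_apply]

def vertexRot (y : Fin 6) (c : Bool) : Equiv.Perm (Fin 6) :=
  let cyc := if y.val < 3 then Equiv.swap 3 4 * Equiv.swap 4 5 else Equiv.swap 0 1 * Equiv.swap 1 2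
  if c then cyc else cyc⁻¹

def rot (b : Fin 6 → Bool) (y : Fin 6) : Equiv.Perm (Fin 6) :=
  vertexRot y (b y)

def baseSigns (y : Fin 6) : Bool :=
  decide (y = 5)

-- All 72 automorphisms of `K_{3,3}` arise this way.
def blockAut (s : Bool) (σ τ : Equiv.Perm (Fin 3)) : Equiv.Perm (Fin 6) :=
  Equiv.permCongr finSumFinEquiv (Equiv.sumCongr σ τ * if s then Equiv.sumComm _ _ else 1)

def OneSideConstant (b : Fin 6 → Bool) : Prop :=
  Xor (b 0 = b 1 ∧ b 1 = b 2) (b 3 = b 4 ∧ b 4 = b 5)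

instance (b : Fin 6 → Bool) : Decidable (OneSideConstant b) := by
  unfold OneSideConstant; infer_instance

set_option maxRecDepth 10000 in
theorem exists_eq_vertexRot : ∀ (y : Fin 6) (σ : Equiv.Perm (Fin 6)),
    (∀ x, adjK33 x y → adjK33 (σ x) y ∧ σ x ≠ x) → (∀ x, ¬ adjK33 x y → σ x = x) →
    ∃ c, σ = vertexRot y c := by
  decide

theorem _root_.IsRotSysK33.exists_eq_rot {ρ : Fin 6 → Equiv.Perm (Fin 6)} (h : IsRotSysK33 ρ) :
    ∃ b, ρ = rot b := by
  choose b hb using fun y => exists_eq_vertexRot y (ρ y) (h y).1 (h y).2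
  exact ⟨b, funext hb⟩

theorem isRotSysK33_rot (b : Fin 6 → Bool) : IsRotSysK33 (rot b) := fun y => by
  unfold rot
  generalize b y = c
  revert y c
  decide

theorem isAut_blockAut : ∀ s σ τ, IsAut (blockAut s σ τ) := by
  decide

theorem oneFaceK33_rot_baseSigns : OneFaceK33 (rot baseSigns) :=
  (oneFaceK33_iff (d₀ := (0, 3)) (by decide)).2 (by decide)

set_option maxRecDepth 2000 in
theorem OneSideConstant.of_oneFaceK33 {b : Fin 6 → Bool} (h : OneFaceK33 (rot b)) :
    OneSideConstant b := by
  revert b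
  have hd₀ : adjK33 (0 : Fin 6) 3 := by decide
  simp only [oneFaceK33_iff (d₀ := (0, 3)) hd₀]
  decide

theorem exists_blockAut_transports : ∀ b, OneSideConstant b →
    ∃ s σ τ, Transports (blockAut s σ τ) (rot baseSigns) (rot b) := by
  decide

end K33

open K33

/-- There is exactly one equivalence class of rotation systems of `K_{3,3}` with
one face: `K_{3,3}` has a unique 2-cell embedding on the double torus. -/
theorem K33_double_torus_unique :
    (∃ ρ, IsRotSysK33 ρ ∧ OneFaceK33 ρ) ∧
    ∀ ρ ρ', IsRotSysK33 ρ → IsRotSysK33 ρ' → OneFaceK33 ρ → OneFaceK33 ρ' →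
      EquivRotK33 ρ ρ' := by
  refine ⟨⟨rot baseSigns, isRotSysK33_rot _, oneFaceK33_rot_baseSigns⟩, ?_⟩
  intro ρ ρ' hρ hρ' hf hf'
  obtain ⟨b, rfl⟩ := hρ.exists_eq_rot
  obtain ⟨b', rfl⟩ := hρ'.exists_eq_rot
  obtain ⟨s, σ, τ, h⟩ := exists_blockAut_transports b (.of_oneFaceK33 hf)
  obtain ⟨s', σ', τ', h'⟩ := exists_blockAut_transports b' (.of_oneFaceK33 hf')
  exact equivRotK33_of_transports (isAut_blockAut s σ τ) (isAut_blockAut s' σ' τ') h h'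
end

section
/- With rotation systems, face permutation, and equivalence (graph automorphisms together with reflection) for K_{3,3} defined as follows, the total number of equivalence classes of all 64 rotation systems of K_{3,3} is exactly 3. -/
/-!
A rotation at a vertex of `K_{3,3}` is one of the two 3-cycles of its neighbours, so a rotation
system is an orientation vector in `Bool⁶`. Composing a possible swap of the two sides with
permutations of each side gives automorphisms, and a finite search places every orientation vector
in the orbit, under these automorphisms and reversal, of one of three representatives: all vertices
oriented alike, one vertex flipped, and one vertex flipped on each side.

An equivalence conjugates the face permutation of one system to that of the other, or to its
inverse, so the order of the face permutation is an invariant. For the three representatives it is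
`6`, `18` and `20` (faces of lengths `6, 6, 6`, then `18`, then `4, 4, 10`), so they are pairwise
inequivalent.
-/

open Equiv

namespace RotationSystem

variable {V : Type*}

def transport (φ : Perm V) (ρ : V → Perm V) : V → Perm V :=
  fun y => φ * ρ (φ⁻¹ y) * φ⁻¹

def reverse (ρ : V → Perm V) : V → Perm V :=
  fun y => (ρ y)⁻¹

@[simp]
lemma transport_apply_apply (φ : Perm V) (ρ : V → Perm V) (y x : V) :
    transport φ ρ (φ y) (φ x) = φ (ρ y x) := by
  simp [transport]

/-- Defined on all ordered pairs, not only on darts: for a rotation system of a bipartite graph this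
only adds fixed points `(x, x)` and transpositions `(x, y) ↔ (y, x)` of non-adjacent pairs, which
leave the order unchanged since all faces have even length. -/
def facePerm (ρ : V → Perm V) : Perm (V × V) where
  toFun d := (d.2, ρ d.2 d.1)
  invFun d := ((ρ d.1)⁻¹ d.2, d.1)
  left_inv d := by simp
  right_inv d := by simp

lemma semiconjBy_facePerm_transport (φ : Perm V) (ρ : V → Perm V) :
    SemiconjBy (prodCongr φ φ) (facePerm ρ) (facePerm (transport φ ρ)) := by
  ext ⟨x, y⟩ <;> simp [facePerm]

lemma semiconjBy_facePerm_reverse (ρ : V → Perm V) :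
    SemiconjBy (prodComm V V) (facePerm ρ)⁻¹ (facePerm (reverse ρ)) := by
  ext ⟨x, y⟩ <;> simp [facePerm, reverse]

end RotationSystem

open RotationSystem

instance : DecidableRel adjK33 := fun x y => by unfold adjK33; infer_instance

namespace K33

def aut : Subgroup (Perm (Fin 6)) where
  carrier := {φ | ∀ x y, adjK33 x y ↔ adjK33 (φ x) (φ y)}
  mul_mem' hφ hψ x y := (hψ x y).trans (hφ _ _)
  one_mem' _ _ := Iff.rfl
  inv_mem' {φ} hφ x y := by simpa using (hφ (φ⁻¹ x) (φ⁻¹ y)).symm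

lemma mem_aut {φ : Perm (Fin 6)} : φ ∈ aut ↔ ∀ x y, adjK33 x y ↔ adjK33 (φ x) (φ y) :=
  Iff.rfl

instance : DecidablePred (· ∈ aut) :=
  fun φ => inferInstanceAs (Decidable (∀ x y, adjK33 x y ↔ adjK33 (φ x) (φ y)))

def sideSwap : Perm (Fin 6) := swap 0 3 * swap 1 4 * swap 2 5

def leftPerms : List (Perm (Fin 6)) := [1, swap 0 1, swap 0 2, swap 1 2, c[0, 1, 2], c[0, 2, 1]]

def rightPerms : List (Perm (Fin 6)) := [1, swap 3 4, swap 3 5, swap 4 5, c[3, 4, 5], c[3, 5, 4]]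

lemma mem_aut_of_mem_generators : ∀ φ ∈ [1, sideSwap] ++ leftPerms ++ rightPerms, φ ∈ aut := by
  decide +kernel

lemma mul_mul_mem_aut {s a b : Perm (Fin 6)} (hs : s ∈ [1, sideSwap]) (ha : a ∈ leftPerms)
    (hb : b ∈ rightPerms) : s * a * b ∈ aut :=
  have h := mem_aut_of_mem_generators
  mul_mem (mul_mem (h s (List.mem_append_left _ (List.mem_append_left _ hs)))
    (h a (List.mem_append_left _ (List.mem_append_right _ ha)))) (h b (List.mem_append_right _ hb))

def ofOrientation (o : Fin 6 → Bool) : Fin 6 → Perm (Fin 6) := fun y =>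
  if y.val < 3 then (if o y then c[3, 4, 5] else c[3, 5, 4])
  else (if o y then c[0, 1, 2] else c[0, 2, 1])

def orientation (ρ : Fin 6 → Perm (Fin 6)) : Fin 6 → Bool := fun y =>
  if y.val < 3 then ρ y 3 = 4 else ρ y 0 = 1

lemma isRotSysK33_ofOrientation : ∀ o, IsRotSysK33 (ofOrientation o) := by
  unfold IsRotSysK33; decide +kernel

lemma eq_ofOrientation_of_rotates_neighbors : ∀ (y : Fin 6) (σ : Perm (Fin 6)),
    ((∀ x, adjK33 x y → adjK33 (σ x) y ∧ σ x ≠ x) ∧ (∀ x, ¬ adjK33 x y → σ x = x)) →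
    σ = ofOrientation (orientation (Function.const _ σ)) y := by
  decide +kernel

lemma _root_.IsRotSysK33.eq_ofOrientation {ρ : Fin 6 → Perm (Fin 6)} (hρ : IsRotSysK33 ρ) :
    ρ = ofOrientation (orientation ρ) :=
  funext fun y => eq_ofOrientation_of_rotates_neighbors y (ρ y) (hρ y)

lemma _root_.IsRotSysK33.transport {φ : Perm (Fin 6)} (hφ : φ ∈ aut) {ρ : Fin 6 → Perm (Fin 6)}
    (hρ : IsRotSysK33 ρ) : IsRotSysK33 (transport φ ρ) := by
  intro v
  obtain ⟨y, rfl⟩ := φ.surjective v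
  refine ⟨fun w hw => ?_, fun w hw => ?_⟩ <;> obtain ⟨x, rfl⟩ := φ.surjective w <;>
    rw [transport_apply_apply]
  · obtain ⟨hadj, hne⟩ := (hρ y).1 x ((mem_aut.1 hφ x y).2 hw)
    exact ⟨(mem_aut.1 hφ _ _).1 hadj, φ.injective.ne hne⟩
  · rw [(hρ y).2 x fun h => hw ((mem_aut.1 hφ x y).1 h)]

lemma _root_.IsRotSysK33.reverse {ρ : Fin 6 → Perm (Fin 6)} (hρ : IsRotSysK33 ρ) :
    IsRotSysK33 (reverse ρ) := by
  intro y
  have hfix : ∀ x, ¬ adjK33 x y → (ρ y)⁻¹ x = x :=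
    fun x hx => Perm.inv_eq_iff_eq.2 ((hρ y).2 x hx).symm
  refine ⟨fun x hx => ?_, hfix⟩
  have hz : ρ y ((ρ y)⁻¹ x) = x := by simp
  have hz_adj : adjK33 ((ρ y)⁻¹ x) y := by
    by_contra h
    rw [((hρ y).2 _ h).symm.trans hz] at h
    exact h hx
  exact ⟨hz_adj, fun h => ((hρ y).1 _ hz_adj).2 (hz.trans h.symm)⟩

lemma equivRotK33_transport {φ : Perm (Fin 6)} (hφ : φ ∈ aut) (ρ : Fin 6 → Perm (Fin 6)) :
    EquivRotK33 ρ (transport φ ρ) :=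
  ⟨φ, hφ, Or.inl fun x y _ => transport_apply_apply φ ρ y x⟩

lemma equivRotK33_transport_reverse {φ : Perm (Fin 6)} (hφ : φ ∈ aut)
    (ρ : Fin 6 → Perm (Fin 6)) : EquivRotK33 ρ (transport φ (reverse ρ)) :=
  ⟨φ, hφ, Or.inr fun x y _ => transport_apply_apply φ (reverse ρ) y x⟩

lemma eq_transport_of_forall_adjK33 {φ : Perm (Fin 6)} (hφ : φ ∈ aut)
    {ρ σ : Fin 6 → Perm (Fin 6)} (hρ : ∀ y x, ¬ adjK33 x y → ρ y x = x)
    (hσ : ∀ y x, ¬ adjK33 x y → σ y x = x)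
    (h : ∀ x y, adjK33 x y → σ (φ y) (φ x) = φ (ρ y x)) : σ = transport φ ρ := by
  funext v
  refine Equiv.ext fun w => ?_
  obtain ⟨y, rfl⟩ := φ.surjective v
  obtain ⟨x, rfl⟩ := φ.surjective w
  rw [transport_apply_apply]
  by_cases hxy : adjK33 x y
  · exact h x y hxy
  · rw [hρ y x hxy, hσ _ _ fun h' => hxy ((mem_aut.1 hφ x y).2 h')]

lemma _root_.EquivRotK33.exists_eq_transport {ρ ρ' : Fin 6 → Perm (Fin 6)} (hρ : IsRotSysK33 ρ)
    (hρ' : IsRotSysK33 ρ') (h : EquivRotK33 ρ ρ') :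
    ∃ φ, ρ' = transport φ ρ ∨ ρ' = transport φ (reverse ρ) := by
  obtain ⟨φ, hφ, H | H⟩ := h
  · exact ⟨φ, .inl (eq_transport_of_forall_adjK33 hφ (fun y => (hρ y).2) (fun y => (hρ' y).2) H)⟩
  · exact ⟨φ, .inr (eq_transport_of_forall_adjK33 hφ (fun y => (hρ.reverse y).2)
      (fun y => (hρ' y).2) H)⟩

lemma _root_.EquivRotK33.orderOf_facePerm_eq {ρ ρ' : Fin 6 → Perm (Fin 6)} (hρ : IsRotSysK33 ρ)
    (hρ' : IsRotSysK33 ρ') (h : EquivRotK33 ρ ρ') :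
    orderOf (facePerm ρ) = orderOf (facePerm ρ') := by
  obtain ⟨φ, rfl | rfl⟩ := h.exists_eq_transport hρ hρ'
  · exact SemiconjBy.orderOf_eq _ (semiconjBy_facePerm_transport φ ρ)
  · rw [← SemiconjBy.orderOf_eq _ (semiconjBy_facePerm_transport φ _),
      ← SemiconjBy.orderOf_eq _ (semiconjBy_facePerm_reverse ρ), orderOf_inv]

def repOrientation : Fin 3 → Fin 6 → Bool :=
  ![![false, false, false, false, false, false],
    ![false, false, false, false, false, true],
    ![false, false, true, false, false, true]]

def reps (i : Fin 3) : Fin 6 → Perm (Fin 6) :=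
  ofOrientation (repOrientation i)

lemma isRotSysK33_reps (i : Fin 3) : IsRotSysK33 (reps i) :=
  isRotSysK33_ofOrientation _

lemma exists_orientation_eq_transport_reps : ∀ o : Fin 6 → Bool, ∃ i, ∃ s ∈ [1, sideSwap],
    ∃ a ∈ leftPerms, ∃ b ∈ rightPerms, o = orientation (transport (s * a * b) (reps i)) ∨
      o = orientation (transport (s * a * b) (reverse (reps i))) := by
  decide +kernel

lemma exists_equivRotK33_reps {ρ : Fin 6 → Perm (Fin 6)} (hρ : IsRotSysK33 ρ) :
    ∃ i, EquivRotK33 (reps i) ρ := by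
  obtain ⟨i, s, hs, a, ha, b, hb, h⟩ := exists_orientation_eq_transport_reps (orientation ρ)
  have hφ := mul_mul_mem_aut hs ha hb
  rcases h with h | h
  · have : ρ = transport (s * a * b) (reps i) := by
      rw [hρ.eq_ofOrientation, h, ← ((isRotSysK33_reps i).transport hφ).eq_ofOrientation]
    exact ⟨i, this ▸ equivRotK33_transport hφ _⟩
  · have : ρ = transport (s * a * b) (reverse (reps i)) := by
      rw [hρ.eq_ofOrientation, h, ← ((isRotSysK33_reps i).reverse.transport hφ).eq_ofOrientation]
    exact ⟨i, this ▸ equivRotK33_transport_reverse hφ _⟩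

lemma injective_orderOf_facePerm_reps :
    Function.Injective fun i => orderOf (facePerm (reps i)) := by
  have h : (fun i => orderOf (facePerm (reps i))) = ![6, 18, 20] := by
    funext i
    fin_cases i <;> rw [orderOf_eq_iff (by decide)] <;> decide +kernel
  rw [h]
  decide

end K33

/-- The 64 rotation systems of `K_{3,3}` fall into exactly 3 equivalence
classes under automorphisms and reflection. -/
theorem K33_three_classes :
    ∃ reps : Fin 3 → (Fin 6 → Equiv.Perm (Fin 6)),
      (∀ i, IsRotSysK33 (reps i)) ∧
      ∀ ρ, IsRotSysK33 ρ → ∃! i, EquivRotK33 (reps i) ρ := by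
  refine ⟨K33.reps, K33.isRotSysK33_reps, fun ρ hρ => ?_⟩
  obtain ⟨i, hi⟩ := K33.exists_equivRotK33_reps hρ
  refine ⟨i, hi, fun j hj => K33.injective_orderOf_facePerm_reps ?_⟩
  exact (hj.orderOf_facePerm_eq (K33.isRotSysK33_reps j) hρ).trans
    (hi.orderOf_facePerm_eq (K33.isRotSysK33_reps i) hρ).symm
end
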